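/- In an e-ring, suppose every element of G commutes with every projection and for every g ∈ G there exists a projection p with (1−p)g ≤ 0 ≤ pg. Then G is a lattice-ordered group, with g ∨ h = p(g−h) + h for p chosen so that (1−p)(g−h) ≤ 0 ≤ p(g−h). -/

import Mathlib

/-- An e-ring: an associative unital ring `R` together with a set `E` of effects.
`E⁺` is the additive submonoid generated by `E` (the set of finite sums of effects). -/
structure ERing (R : Type*) [Ring R] where
  E : Set R
  zero_mem : (0:R) ∈ E
  one_mem : (1:R) ∈ E
  compl_mem : ∀ e ∈ E, 1 - e ∈ E
  ax_i : ∀ a ∈ AddSubmonoid.closure E, -a ∈ AddSubmonoid.closure E → a = 0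
  ax_ii : ∀ a ∈ AddSubmonoid.closure E, 1 - a ∈ AddSubmonoid.closure E → a ∈ E
  ax_iii : ∀ a ∈ AddSubmonoid.closure E, ∀ b ∈ AddSubmonoid.closure E,
    a * b = b * a → a * b ∈ AddSubmonoid.closure E
  ax_iv : ∀ a ∈ AddSubmonoid.closure E, ∀ b ∈ AddSubmonoid.closure E,
    a * b * a ∈ AddSubmonoid.closure E
  ax_v : ∀ a ∈ AddSubmonoid.closure E, ∀ b ∈ AddSubmonoid.closure E,
    a * b * a = 0 → a * b = 0 ∧ b * a = 0
  ax_vi : ∀ a ∈ AddSubmonoid.closure E, ∀ b ∈ AddSubmonoid.closure E,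
    (a - b) * (a - b) ∈ AddSubmonoid.closure E

namespace ERing

variable {R : Type*} [Ring R]

/-- The positive cone `E⁺`: all finite sums of effects. -/
def Ep (S : ERing R) : Set R := (AddSubmonoid.closure S.E : Set R)

/-- The directed group `G = E⁺ − E⁺` (as a subset of `R`). -/
def G (S : ERing R) : Set R := {x | ∃ a ∈ S.Ep, ∃ b ∈ S.Ep, x = a - b}

/-- The partial order with positive cone `E⁺`: `g ≤ h` iff `h − g ∈ E⁺`. -/
def le (S : ERing R) (g h : R) : Prop := h - g ∈ S.Ep

/-- The set of projections: idempotent elements of `G`. -/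
def P (S : ERing R) : Set R := {p | p ∈ S.G ∧ p * p = p}

end ERing

/-!
Write `d = g - h` and pick a projection `p` with `(1 - p) d ≤ 0 ≤ p d`. Then `s = p d + h`
lies above `g` and `h`, since `s - g = -(1 - p) d` and `s - h = p d`. For any common upper bound
`k` one has `k - s = p (k - g) + (1 - p) (k - h)`, and each summand is a product of two commuting
positive elements, hence positive. Dually `g - p d` is the infimum.
-/

namespace ERing

variable {R : Type*} [Ring R] (S : ERing R)

def IsSup (g h s : R) : Prop :=
  S.le g s ∧ S.le h s ∧ ∀ k ∈ S.G, S.le g k → S.le h k → S.le s k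

def IsInf (g h m : R) : Prop :=
  S.le m g ∧ S.le m h ∧ ∀ k ∈ S.G, S.le k g → S.le k h → S.le k m

variable {S}

theorem one_mem_Ep : (1 : R) ∈ S.Ep := AddSubmonoid.subset_closure S.one_mem

theorem mem_G_of_mem_Ep {a : R} (ha : a ∈ S.Ep) : a ∈ S.G :=
  ⟨a, ha, 0, AddSubmonoid.zero_mem _, (sub_zero a).symm⟩

theorem add_mem_G {x y : R} (hx : x ∈ S.G) (hy : y ∈ S.G) : x + y ∈ S.G := by
  obtain ⟨a, ha, b, hb, rfl⟩ := hx
  obtain ⟨c, hc, d, hd, rfl⟩ := hy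
  exact ⟨a + c, add_mem ha hc, b + d, add_mem hb hd, by abel⟩

theorem sub_mem_G {x y : R} (hx : x ∈ S.G) (hy : y ∈ S.G) : x - y ∈ S.G := by
  obtain ⟨a, ha, b, hb, rfl⟩ := hx
  obtain ⟨c, hc, d, hd, rfl⟩ := hy
  exact ⟨a + d, add_mem ha hd, b + c, add_mem hb hc, by abel⟩

theorem mem_Ep_of_mem_P {p : R} (hp : p ∈ S.P) : p ∈ S.Ep := by
  obtain ⟨⟨a, ha, b, hb, rfl⟩, hpp⟩ := hp
  rw [← hpp]
  exact S.ax_vi a ha b hb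

theorem one_sub_mem_P {p : R} (hp : p ∈ S.P) : 1 - p ∈ S.P := by
  refine ⟨sub_mem_G (mem_G_of_mem_Ep one_mem_Ep) hp.1, ?_⟩
  rw [sub_mul, one_mul, mul_sub, mul_one, hp.2, sub_self, sub_zero]

theorem add_mem_Ep {a b : R} (ha : a ∈ S.Ep) (hb : b ∈ S.Ep) : a + b ∈ S.Ep :=
  AddSubmonoid.add_mem _ ha hb

theorem proj_mul_mem_Ep {p a : R} (hp : p ∈ S.P) (ha : a ∈ S.Ep) (hpa : a * p = p * a) :
    p * a ∈ S.Ep :=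
  S.ax_iii p (mem_Ep_of_mem_P hp) a ha hpa.symm

theorem one_sub_proj_mul_mem_Ep {p a : R} (hp : p ∈ S.P) (ha : a ∈ S.Ep) (hpa : a * p = p * a) :
    (1 - p) * a ∈ S.Ep :=
  proj_mul_mem_Ep (one_sub_mem_P hp) ha (by rw [mul_sub, sub_mul, mul_one, one_mul, hpa])

theorem isSup_proj_mul_sub_add {g h p : R} (hp : p ∈ S.P) (hpc : ∀ a ∈ S.Ep, a * p = p * a)
    (hneg : S.le ((1 - p) * (g - h)) 0) (hpos : S.le 0 (p * (g - h))) :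
    S.IsSup g h (p * (g - h) + h) := by
  refine ⟨?_, ?_, fun k _ hgk hhk => ?_⟩
  · unfold le
    rw [show p * (g - h) + h - g = 0 - (1 - p) * (g - h) by noncomm_ring]
    exact hneg
  · unfold le
    rw [show p * (g - h) + h - h = p * (g - h) - 0 by noncomm_ring]
    exact hpos
  · unfold le
    rw [show k - (p * (g - h) + h) = p * (k - g) + (1 - p) * (k - h) by noncomm_ring]
    exact add_mem_Ep (proj_mul_mem_Ep hp hgk (hpc _ hgk))
      (one_sub_proj_mul_mem_Ep hp hhk (hpc _ hhk))

theorem isInf_sub_proj_mul_sub {g h p : R} (hp : p ∈ S.P) (hpc : ∀ a ∈ S.Ep, a * p = p * a)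
    (hneg : S.le ((1 - p) * (g - h)) 0) (hpos : S.le 0 (p * (g - h))) :
    S.IsInf g h (g - p * (g - h)) := by
  refine ⟨?_, ?_, fun k _ hkg hkh => ?_⟩
  · unfold le
    rw [show g - (g - p * (g - h)) = p * (g - h) - 0 by noncomm_ring]
    exact hpos
  · unfold le
    rw [show h - (g - p * (g - h)) = 0 - (1 - p) * (g - h) by noncomm_ring]
    exact hneg
  · unfold le
    rw [show g - p * (g - h) - k = (1 - p) * (g - k) + p * (h - k) by noncomm_ring]
    exact add_mem_Ep (one_sub_proj_mul_mem_Ep hp hkg (hpc _ hkg))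
      (proj_mul_mem_Ep hp hkh (hpc _ hkh))

end ERing

theorem stmt19 {R : Type*} [Ring R] (S : ERing R)
    (hcomm : ∀ g ∈ S.G, ∀ p ∈ S.P, g * p = p * g)
    (hproj : ∀ g ∈ S.G, ∃ p ∈ S.P, S.le ((1 - p) * g) 0 ∧ S.le 0 (p * g)) :
    ∀ g ∈ S.G, ∀ h ∈ S.G,
      (∃ s ∈ S.G, S.le g s ∧ S.le h s ∧
        ∀ k ∈ S.G, S.le g k → S.le h k → S.le s k) ∧
      (∃ m ∈ S.G, S.le m g ∧ S.le m h ∧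
        ∀ k ∈ S.G, S.le k g → S.le k h → S.le k m) ∧
      (∀ p ∈ S.P, S.le ((1 - p) * (g - h)) 0 → S.le 0 (p * (g - h)) →
        S.le g (p * (g - h) + h) ∧ S.le h (p * (g - h) + h) ∧
        ∀ k ∈ S.G, S.le g k → S.le h k → S.le (p * (g - h) + h) k) := by
  have hpc : ∀ p ∈ S.P, ∀ a ∈ S.Ep, a * p = p * a := fun p hp a ha =>
    hcomm a (ERing.mem_G_of_mem_Ep ha) p hp
  intro g hg h hh
  obtain ⟨p, hp, hneg, hpos⟩ := hproj (g - h) (ERing.sub_mem_G hg hh)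
  have hposG : p * (g - h) ∈ S.G := ERing.mem_G_of_mem_Ep (by simpa [ERing.le] using hpos)
  exact ⟨⟨_, ERing.add_mem_G hposG hh, ERing.isSup_proj_mul_sub_add hp (hpc p hp) hneg hpos⟩,
    ⟨_, ERing.sub_mem_G hg hposG, ERing.isInf_sub_proj_mul_sub hp (hpc p hp) hneg hpos⟩,
    fun q hq hqneg hqpos => ERing.isSup_proj_mul_sub_add hq (hpc q hq) hqneg hqpos⟩
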